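/- Let I be an invariant ideal on ℕ, let x = (x_n) be a sequence in a topological space X with x →_I ℓ, and let ω ∈ (0,1] be a normal number, i.e., (1/n) Σ_{i=1}^n d_i(ω) → 1/2. Then x↾ω →_I ℓ. -/

import Mathlib

open Filter Topology MeasureTheory Set

/-- The canonical (increasing) enumeration of a set of natural numbers. -/
noncomputable def enumOf (A : Set ℕ) : ℕ → ℕ := Nat.nth (· ∈ A)

/-- `idxSet A B` is the set `A_B = {a_b : b ∈ B}`, where `{a_n}` is the canonical
enumeration of `A`. -/
noncomputable def idxSet (A B : Set ℕ) : Set ℕ := enumOf A '' B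

/-- `seqLE X Y` means `X ≤ Y`, i.e. `x_n ≤ y_n` for all `n`, for the canonical
enumerations `{x_n}` of `X` and `{y_n}` of `Y`. -/
def seqLE (X Y : Set ℕ) : Prop := ∀ n, enumOf X n ≤ enumOf Y n

/-- `A` has asymptotic density `c`: `|A ∩ [1,n]| / n → c`. -/
def HasDensity (A : Set ℕ) (c : ℝ) : Prop :=
  Tendsto (fun n : ℕ => ((A ∩ Set.Icc 1 n).ncard : ℝ) / n) atTop (𝓝 c)

/-- An ideal on ℕ: closed under finite unions and subsets, contains all finite sets,
and is not the whole power set. -/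
def IsIdeal (I : Set (Set ℕ)) : Prop :=
  (∀ A B : Set ℕ, A ∈ I → B ∈ I → A ∪ B ∈ I) ∧
  (∀ A B : Set ℕ, A ⊆ B → B ∈ I → A ∈ I) ∧
  (∀ A : Set ℕ, A.Finite → A ∈ I) ∧
  Set.univ ∉ I

/-- `I` is weakly thinnable: `A_B ∉ I` whenever `A` admits non-zero asymptotic density
and `B ∉ I`. -/
def WeaklyThinnable (I : Set (Set ℕ)) : Prop :=
  ∀ A B : Set ℕ, (∃ c : ℝ, c ≠ 0 ∧ HasDensity A c) → B ∉ I → idxSet A B ∉ I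

/-- `I` is thinnable: weakly thinnable, `B_A ∉ I` whenever `A` admits non-zero asymptotic
density and `B ∉ I`, and `X ∉ I` whenever `X ≤ Y` and `Y ∉ I`. -/
def Thinnable (I : Set (Set ℕ)) : Prop :=
  WeaklyThinnable I ∧
  (∀ A B : Set ℕ, (∃ c : ℝ, c ≠ 0 ∧ HasDensity A c) → B ∉ I → idxSet B A ∉ I) ∧
  (∀ X Y : Set ℕ, X.Infinite → Y.Infinite → seqLE X Y → Y ∉ I → X ∉ I)

/-- `I` is strechable: `kA ∉ I` for all (positive) `k` and all `A ∉ I`. -/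
def Strechable (I : Set (Set ℕ)) : Prop :=
  ∀ k : ℕ, 0 < k → ∀ A : Set ℕ, A ∉ I → (fun a => k * a) '' A ∉ I

/-- The digit `d_{i+1}(ω)` of the non-terminating dyadic expansion of `ω ∈ (0,1]`
(digits are indexed from `0` to match `0`-indexed sequences). -/
noncomputable def dyadicDigit (ω : ℝ) (i : ℕ) : ℤ :=
  ⌈(2 : ℝ) ^ (i + 1) * ω⌉ - 2 * ⌈(2 : ℝ) ^ i * ω⌉ + 1

/-- The set of indices kept when passing to the subsequence `x ↾ ω`. -/
def keepSet (ω : ℝ) : Set ℕ := {i | dyadicDigit ω i = 1}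

/-- The subsequence `x ↾ ω` of `x`, keeping `x_i` exactly when `d_i(ω) = 1`. -/
noncomputable def subseq {X : Type*} (x : ℕ → X) (ω : ℝ) : ℕ → X :=
  fun n => x (enumOf (keepSet ω) n)

/-- `ω` is a normal number: `(1/n) ∑_{i=1}^n d_i(ω) → 1/2`. -/
def IsNormal (ω : ℝ) : Prop :=
  Tendsto (fun n : ℕ => (∑ i ∈ Finset.range n, (dyadicDigit ω i : ℝ)) / n) atTop (𝓝 (1 / 2))

/-- `x →_I l`: the sequence `x` `I`-converges to `l`. -/
def IdealConv {X : Type*} [TopologicalSpace X] (I : Set (Set ℕ)) (x : ℕ → X) (l : X) : Prop :=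
  ∀ U ∈ 𝓝 l, {n | x n ∉ U} ∈ I

/-- `I` is invariant: for each `A` with positive asymptotic density,
`A_B ∉ I` if and only if `B ∉ I`. -/
def Invariant (I : Set (Set ℕ)) : Prop :=
  ∀ A B : Set ℕ, (∃ c : ℝ, 0 < c ∧ HasDensity A c) → (idxSet A B ∉ I ↔ B ∉ I)

/-!
Since `ω` is normal, the set of kept indices has asymptotic density `1/2`, and `x ↾ ω` is
`x ∘ enumOf (keepSet ω)`. The indices where `x ↾ ω` leaves a neighbourhood `U` of `ℓ` are
mapped by this enumeration into the indices where `x` leaves `U`, a set in `I`; invariance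
of `I` pulls this back.
-/

theorem dyadicDigit_eq_zero_or_one (ω : ℝ) (i : ℕ) :
    dyadicDigit ω i = 0 ∨ dyadicDigit ω i = 1 := by
  unfold dyadicDigit
  rw [pow_succ, mul_comm _ (2 : ℝ), mul_assoc]
  set t : ℝ := 2 ^ i * ω
  have h_le : ⌈2 * t⌉ ≤ 2 * ⌈t⌉ := by
    rw [Int.ceil_le]
    push_cast
    linarith [Int.le_ceil t]
  have h_gt : 2 * ⌈t⌉ - 2 < ⌈2 * t⌉ := by
    rw [Int.lt_ceil]
    push_cast
    linarith [Int.ceil_lt_add_one t]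
  omega

/-- Density counts the digits `d_1, …, d_n`, the normality average `d_0, …, d_{n-1}`. -/
theorem ncard_keepSet_inter_Icc (ω : ℝ) (n : ℕ) :
    ((keepSet ω ∩ Icc 1 n).ncard : ℝ) =
      ∑ i ∈ Finset.range n, (dyadicDigit ω i : ℝ) + (dyadicDigit ω n - dyadicDigit ω 0) := by
  have h_set : keepSet ω ∩ Icc 1 n = ↑((Finset.Icc 1 n).filter (dyadicDigit ω · = 1)) := by
    ext i
    simp [keepSet, and_comm]
  have h_card : (((Finset.Icc 1 n).filter (dyadicDigit ω · = 1)).card : ℝ) =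
      ∑ i ∈ Finset.Icc 1 n, (dyadicDigit ω i : ℝ) := by
    rw [Finset.card_filter]
    push_cast
    refine Finset.sum_congr rfl fun i _ => ?_
    rcases dyadicDigit_eq_zero_or_one ω i with h | h <;> simp [h]
  have h_sum : ∑ i ∈ Finset.range (n + 1), (dyadicDigit ω i : ℝ) =
      dyadicDigit ω 0 + ∑ i ∈ Finset.Icc 1 n, (dyadicDigit ω i : ℝ) := by
    rw [Finset.range_eq_Ico, Finset.sum_eq_sum_Ico_succ_bot n.succ_pos]
    rfl
  rw [h_set, Set.ncard_coe_finset, h_card]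
  rw [Finset.sum_range_succ] at h_sum
  linarith

theorem hasDensity_keepSet {ω : ℝ} (hω : IsNormal ω) : HasDensity (keepSet ω) (1 / 2) := by
  have h_err : Tendsto (fun n : ℕ => ((dyadicDigit ω n - dyadicDigit ω 0 : ℝ)) / n)
      atTop (𝓝 0) := by
    refine squeeze_zero_norm (fun n => ?_) tendsto_one_div_atTop_nhds_zero_nat
    rw [norm_div, Real.norm_natCast, Real.norm_eq_abs]
    gcongr
    rcases dyadicDigit_eq_zero_or_one ω n with h | h <;>
      rcases dyadicDigit_eq_zero_or_one ω 0 with h₀ | h₀ <;> simp [h, h₀]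
  have h_lim := hω.add h_err
  rw [add_zero] at h_lim
  refine h_lim.congr fun n => ?_
  rw [ncard_keepSet_inter_Icc, add_div]

theorem IdealConv.comp_enumOf {X : Type*} [TopologicalSpace X] {I : Set (Set ℕ)}
    (hI : IsIdeal I) (hinv : Invariant I) {x : ℕ → X} {l : X} (hx : IdealConv I x l)
    {A : Set ℕ} {c : ℝ} (hc : 0 < c) (hA : HasDensity A c) :
    IdealConv I (x ∘ enumOf A) l := by
  intro U hU
  by_contra hB
  refine (hinv A _ ⟨c, hc, hA⟩).2 hB (hI.2.1 _ _ ?_ (hx U hU))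
  rintro _ ⟨n, hn, rfl⟩
  exact hn

theorem stmt13_general {X : Type*} [TopologicalSpace X]
    (I : Set (Set ℕ)) (hI : IsIdeal I) (hinv : Invariant I)
    (x : ℕ → X) (l : X) (hconv : IdealConv I x l)
    (ω : ℝ) (hnorm : IsNormal ω) :
    IdealConv I (subseq x ω) l :=
  hconv.comp_enumOf hI hinv one_half_pos (hasDensity_keepSet hnorm)

/-- If `I` is an invariant ideal, `x →_I l`, and `ω ∈ (0,1]` is a normal number,
then `x ↾ ω →_I l`. -/
theorem stmt13 {X : Type*} [TopologicalSpace X]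
    (I : Set (Set ℕ)) (hI : IsIdeal I) (hinv : Invariant I)
    (x : ℕ → X) (l : X) (hconv : IdealConv I x l)
    (ω : ℝ) (hω : ω ∈ Set.Ioc (0 : ℝ) 1) (hnorm : IsNormal ω) :
    IdealConv I (subseq x ω) l :=
  stmt13_general I hI hinv x l hconv ω hnorm
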